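/- Rearrangement of a solution solves the one-dimensional problem (Theorem 3.3, forward direction): let u be a solution of problem P(Ω,u0) on [0,T] such that ∂_t u is bounded on [0,T]×Ω, u0 has no flat regions, u(t,·) has no flat regions for every t ∈ [0,T], and the level-set invariance holds: u0(x1) = u0(x2) implies u(t,x1) = u(t,x2) for all t and, moreover, u0(x1) > u0(x2) implies u(t,x1) ≥ u(t,x2). Let u_*(t,·) denote the decreasing rearrangement of u(t,·). Then u_*(0,·) = u_{0*} and, for every t ∈ [0,T] and almost every s ∈ (0,|Ω|), the map t ↦ u_*(t,s) is differentiable with ∂_t u_*(t,s) = ∫_0^{|Ω|} K_h(u_*(t,σ) − u_*(t,s))·(u_*(t,σ) − u_*(t,s)) dσ + λ(u_{0*}(s) − u_*(t,s)). -/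

import Mathlib

/-!
Fix `t` and `s ∈ (0,|Ω|)`. As `u0` has no flat regions its distribution function is continuous,
so there are points `z n ∈ Ω` whose rank `|{u0 > u0 (z n)}|` decreases to `s`. Level-set
invariance, together with the absence of flat regions of `u τ`, makes the rank of `z n` under
`u τ` independent of `τ`, and right continuity of the rearrangement then gives
`u τ (z n) → u_*(τ,s)` for every `τ`. The trajectories `τ ↦ u τ (z n)` solve `P(Ω,u0)`, and since
`∂_t u` is bounded their derivatives are Lipschitz in time uniformly in `n`; hence the limit
`τ ↦ u_*(τ,s)` is differentiable with the limiting derivative. Equimeasurability of `u t` and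
`u_*(t,·)` finally turns the integral over `Ω` into one over `(0,|Ω|)`.
-/

open MeasureTheory Set

/-- The distribution function `m_w(q) = |{x ∈ Ω : w(x) > q}|`. -/
noncomputable def distFun {d : ℕ} (Ω : Set (Fin d → ℝ)) (w : (Fin d → ℝ) → ℝ)
    (q : ℝ) : ℝ :=
  (volume {x ∈ Ω | q < w x}).toReal

/-- The decreasing rearrangement `w_*(s) = inf{q ∈ ℝ : m_w(q) ≤ s}`. -/
noncomputable def decRearr {d : ℕ} (Ω : Set (Fin d → ℝ)) (w : (Fin d → ℝ) → ℝ)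
    (s : ℝ) : ℝ :=
  sInf {q : ℝ | distFun Ω w q ≤ s}

open Filter Topology

variable {d : ℕ} {Ω : Set (Fin d → ℝ)} {w : (Fin d → ℝ) → ℝ} {M q s : ℝ}

section DistributionFunction

lemma volume_setOf_lt_ne_top (hΩ : volume Ω ≠ ⊤) : volume {x ∈ Ω | q < w x} ≠ ⊤ :=
  ne_top_of_le_ne_top hΩ (measure_mono (sep_subset _ _))

lemma volume_setOf_lt (hΩ : volume Ω ≠ ⊤) :
    volume {x ∈ Ω | q < w x} = ENNReal.ofReal (distFun Ω w q) :=
  (ENNReal.ofReal_toReal (volume_setOf_lt_ne_top hΩ)).symm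

lemma distFun_antitone (hΩ : volume Ω ≠ ⊤) : Antitone (distFun Ω w) := fun _ _ hq =>
  ENNReal.toReal_mono (volume_setOf_lt_ne_top hΩ)
    (measure_mono fun _ hx => ⟨hx.1, hq.trans_lt hx.2⟩)

lemma distFun_nonneg : 0 ≤ distFun Ω w q := ENNReal.toReal_nonneg

lemma distFun_le_toReal_volume (hΩ : volume Ω ≠ ⊤) : distFun Ω w q ≤ (volume Ω).toReal :=
  ENNReal.toReal_mono hΩ (measure_mono (sep_subset _ _))

lemma distFun_of_le (hw : ∀ x ∈ Ω, |w x| ≤ M) (hq : M ≤ q) : distFun Ω w q = 0 := by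
  have : {x ∈ Ω | q < w x} = ∅ :=
    eq_empty_of_forall_notMem fun x hx => by linarith [le_abs_self (w x), hw x hx.1, hx.2]
  simp [distFun, this]

lemma distFun_of_lt_neg (hw : ∀ x ∈ Ω, |w x| ≤ M) (hq : q < -M) :
    distFun Ω w q = (volume Ω).toReal := by
  have : {x ∈ Ω | q < w x} = Ω :=
    sep_eq_self_iff_mem_true.2 fun x hx => by linarith [neg_abs_le (w x), hw x hx]
  rw [distFun, this]

lemma tendsto_distFun_nhdsGT (hΩ : volume Ω ≠ ⊤) (q : ℝ) :
    Tendsto (distFun Ω w) (𝓝[>] q) (𝓝 (distFun Ω w q)) := by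
  have hU : ⋃ r : Ioi q, {x ∈ Ω | (r : ℝ) < w x} = {x ∈ Ω | q < w x} := by
    ext x
    simp only [mem_iUnion, mem_sep_iff, Subtype.exists, mem_Ioi, exists_prop]
    refine ⟨fun ⟨r, hr, hx, hrx⟩ => ⟨hx, hr.trans hrx⟩, fun ⟨hx, hqx⟩ => ?_⟩
    obtain ⟨r, hqr, hrx⟩ := exists_between hqx
    exact ⟨r, hqr, hx, hrx⟩
  have hmeas := tendsto_measure_iUnion_atBot (μ := volume)
    (s := fun r : Ioi q => {x ∈ Ω | (r : ℝ) < w x})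
    fun r r' hrr' x hx => ⟨hx.1, lt_of_le_of_lt (Subtype.mono_coe _ hrr') hx.2⟩
  rw [hU] at hmeas
  rw [← map_coe_Ioi_atBot, tendsto_map'_iff]
  exact (ENNReal.tendsto_toReal (volume_setOf_lt_ne_top hΩ)).comp hmeas

lemma volume_setOf_le_eq (hflat : volume {x ∈ Ω | w x = q} = 0) :
    volume {x ∈ Ω | q ≤ w x} = volume {x ∈ Ω | q < w x} := by
  rw [← measure_sdiff_null hflat]
  congr 1
  ext x
  simp only [Set.mem_sdiff, mem_sep_iff, not_and]
  exact ⟨fun ⟨⟨hx, hqx⟩, hne⟩ => ⟨hx, hqx.lt_of_ne fun h => hne hx h.symm⟩,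
    fun ⟨hx, hqx⟩ => ⟨⟨hx, hqx.le⟩, fun _ => hqx.ne'⟩⟩

lemma tendsto_distFun_nhdsLT (hΩm : MeasurableSet Ω) (hw : Measurable w)
    (hΩ : volume Ω ≠ ⊤) (hflat : volume {x ∈ Ω | w x = q} = 0) :
    Tendsto (distFun Ω w) (𝓝[<] q) (𝓝 (distFun Ω w q)) := by
  have hI : ⋂ r : Iio q, {x ∈ Ω | (r : ℝ) < w x} = {x ∈ Ω | q ≤ w x} := by
    ext x
    simp only [mem_iInter, mem_sep_iff, Subtype.forall, mem_Iio]
    refine ⟨fun hx => ⟨(hx (q - 1) (by linarith)).1, le_of_forall_lt fun r hr => (hx r hr).2⟩,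
      fun ⟨hx, hqx⟩ r hr => ⟨hx, hr.trans_le hqx⟩⟩
  have hmeas := tendsto_measure_iInter_atTop (μ := volume)
    (s := fun r : Iio q => {x ∈ Ω | (r : ℝ) < w x})
    (fun r => (hΩm.inter (hw measurableSet_Ioi)).nullMeasurableSet)
    (fun r r' hrr' x hx => ⟨hx.1, lt_of_le_of_lt (Subtype.mono_coe _ hrr') hx.2⟩)
    ⟨⟨q - 1, by simp⟩, volume_setOf_lt_ne_top hΩ⟩
  rw [hI, volume_setOf_le_eq hflat] at hmeas
  rw [← map_coe_Iio_atTop, tendsto_map'_iff]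
  exact (ENNReal.tendsto_toReal (volume_setOf_lt_ne_top hΩ)).comp hmeas

lemma continuous_distFun (hΩm : MeasurableSet Ω) (hw : Measurable w) (hΩ : volume Ω ≠ ⊤)
    (hflat : ∀ q, volume {x ∈ Ω | w x = q} = 0) : Continuous (distFun Ω w) :=
  continuous_iff_continuousAt.2 fun q => continuousAt_iff_continuous_left'_right'.2
    ⟨tendsto_distFun_nhdsLT hΩm hw hΩ (hflat q), tendsto_distFun_nhdsGT hΩ q⟩

lemma exists_distFun_apply_mem_Ioc (hΩm : MeasurableSet Ω) (hw : Measurable w)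
    (hΩ : volume Ω ≠ ⊤) (hwb : ∀ x ∈ Ω, |w x| ≤ M) (hflat : ∀ q, volume {x ∈ Ω | w x = q} = 0)
    {s₁ s₂ : ℝ} (hs₁ : 0 ≤ s₁) (hs₁₂ : s₁ < s₂) (hs₂ : s₂ ≤ (volume Ω).toReal) :
    ∃ z ∈ Ω, distFun Ω w (w z) ∈ Ioc s₁ s₂ := by
  have hrange : Icc 0 (volume Ω).toReal ⊆ range (distFun Ω w) := by
    simpa [distFun_of_le hwb le_rfl, distFun_of_lt_neg hwb (by linarith : -M - 1 < -M)] using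
      intermediate_value_univ M (-M - 1) (continuous_distFun hΩm hw hΩ hflat)
  obtain ⟨q₁, hq₁⟩ := hrange ⟨by linarith, hs₂⟩
  obtain ⟨q₂, hq₂⟩ := hrange (show (s₁ + s₂) / 2 ∈ Icc 0 (volume Ω).toReal from
    ⟨by linarith, by linarith⟩)
  -- the slab `{q₁ < w < q₂}` has measure at least `s₂ - (s₁ + s₂) / 2 > 0`
  have hcover : {x ∈ Ω | q₁ < w x} ⊆ {x ∈ Ω | q₁ < w x ∧ w x < q₂} ∪ {x ∈ Ω | q₂ ≤ w x} :=
    fun x ⟨hx, hqx⟩ => (lt_or_ge (w x) q₂).imp (fun h => ⟨hx, hqx, h⟩) fun h => ⟨hx, h⟩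
  have hpos : volume {x ∈ Ω | q₁ < w x ∧ w x < q₂} ≠ 0 := by
    intro h0
    have := (measure_mono (μ := volume) hcover).trans (measure_union_le _ _)
    rw [h0, zero_add, volume_setOf_le_eq (hflat q₂), volume_setOf_lt hΩ, volume_setOf_lt hΩ,
      hq₁, hq₂, ENNReal.ofReal_le_ofReal_iff (by linarith)] at this
    linarith
  obtain ⟨z, hz, hq₁z, hzq₂⟩ := nonempty_of_measure_ne_zero hpos
  refine ⟨z, hz, ?_, ?_⟩
  · linarith [distFun_antitone hΩ hzq₂.le (w := w), hq₂]
  · exact hq₁ ▸ distFun_antitone hΩ hq₁z.le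

lemma exists_seq_tendsto_distFun (hΩm : MeasurableSet Ω) (hw : Measurable w)
    (hΩ : volume Ω ≠ ⊤) (hwb : ∀ x ∈ Ω, |w x| ≤ M) (hflat : ∀ q, volume {x ∈ Ω | w x = q} = 0)
    (hs₀ : 0 ≤ s) (hs : s < (volume Ω).toReal) :
    ∃ z : ℕ → Fin d → ℝ, (∀ n, z n ∈ Ω) ∧ (∀ n, s < distFun Ω w (w (z n))) ∧
      Tendsto (fun n => distFun Ω w (w (z n))) atTop (𝓝 s) := by
  obtain ⟨σ, -, hσ, hσs⟩ := exists_seq_strictAnti_tendsto' hs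
  choose z hz hzσ using fun n =>
    exists_distFun_apply_mem_Ioc hΩm hw hΩ hwb hflat hs₀ (hσ n).1 (hσ n).2.le
  exact ⟨z, hz, fun n => (hzσ n).1, tendsto_of_tendsto_of_tendsto_of_le_of_le tendsto_const_nhds
    hσs (fun n => (hzσ n).1.le) fun n => (hzσ n).2⟩

lemma distFun_apply_eq_of_level {f g : (Fin d → ℝ) → ℝ}
    (hmono : ∀ x ∈ Ω, ∀ y ∈ Ω, f y < f x → g y ≤ g x)
    (hlevel : ∀ x ∈ Ω, ∀ y ∈ Ω, f x = f y → g x = g y) {x : Fin d → ℝ}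
    (hflat : volume {y ∈ Ω | g y = g x} = 0) (hx : x ∈ Ω) :
    distFun Ω g (g x) = distFun Ω f (f x) := by
  have hgf : {y ∈ Ω | g x < g y} ⊆ {y ∈ Ω | f x < f y} := by
    rintro y ⟨hy, hgy⟩
    refine ⟨hy, lt_of_not_ge fun hfy => ?_⟩
    rcases hfy.lt_or_eq with h | h
    exacts [(hmono x hx y hy h).not_gt hgy, hgy.ne (hlevel x hx y hy h.symm)]
  have hfg : {y ∈ Ω | f x < f y} ⊆ {y ∈ Ω | g x ≤ g y} :=
    fun y ⟨hy, hfy⟩ => ⟨hy, hmono y hy x hx hfy⟩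
  rw [distFun, distFun, le_antisymm (measure_mono hgf)
    ((measure_mono hfg).trans (volume_setOf_le_eq hflat).le)]

end DistributionFunction

section DecreasingRearrangement

lemma decRearr_congr {w₁ w₂ : (Fin d → ℝ) → ℝ} (h : EqOn w₁ w₂ Ω) :
    decRearr Ω w₁ = decRearr Ω w₂ := by
  have hset : ∀ q, {x ∈ Ω | q < w₁ x} = {x ∈ Ω | q < w₂ x} := fun q =>
    Set.ext fun x => and_congr_right fun hx => by rw [h hx]
  ext s
  simp only [decRearr, distFun, hset]

lemma bddBelow_setOf_distFun_le (hwb : ∀ x ∈ Ω, |w x| ≤ M) (hs : s < (volume Ω).toReal) :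
    BddBelow {q | distFun Ω w q ≤ s} :=
  ⟨-M, fun q hq => le_of_not_gt fun hqM =>
    (show distFun Ω w q ≤ s from hq).not_gt (distFun_of_lt_neg hwb hqM ▸ hs)⟩

lemma decRearr_le_iff (hΩ : volume Ω ≠ ⊤) (hwb : ∀ x ∈ Ω, |w x| ≤ M) (hs₀ : 0 ≤ s)
    (hs : s < (volume Ω).toReal) : decRearr Ω w s ≤ q ↔ distFun Ω w q ≤ s := by
  refine ⟨fun hle => le_of_not_gt fun hlt => ?_, csInf_le (bddBelow_setOf_distFun_le hwb hs)⟩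
  -- right continuity of `distFun` makes `{q | distFun Ω w q ≤ s}` closed from the right
  obtain ⟨q', hq', hqq'⟩ :=
    (((tendsto_distFun_nhdsGT hΩ q).eventually (lt_mem_nhds hlt)).and
      self_mem_nhdsWithin).exists
  have hM : distFun Ω w M ≤ s := (distFun_of_le hwb le_rfl).trans_le hs₀
  obtain ⟨q'', hq'', hq''q'⟩ := exists_lt_of_csInf_lt ⟨M, hM⟩ (hle.trans_lt (mem_Ioi.1 hqq'))
  exact (hq'.trans_le (distFun_antitone hΩ hq''q'.le)).not_ge hq''

lemma lt_decRearr_iff (hΩ : volume Ω ≠ ⊤) (hwb : ∀ x ∈ Ω, |w x| ≤ M) (hs₀ : 0 ≤ s)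
    (hs : s < (volume Ω).toReal) : q < decRearr Ω w s ↔ s < distFun Ω w q :=
  lt_iff_lt_of_le_iff_le (decRearr_le_iff hΩ hwb hs₀ hs)

lemma decRearr_antitoneOn (hΩ : volume Ω ≠ ⊤) (hwb : ∀ x ∈ Ω, |w x| ≤ M) :
    AntitoneOn (decRearr Ω w) (Ico 0 (volume Ω).toReal) := fun _ hs _ hs' hss' =>
  (decRearr_le_iff hΩ hwb hs'.1 hs'.2).2 <|
    ((decRearr_le_iff hΩ hwb hs.1 hs.2).1 le_rfl).trans hss'

lemma continuousWithinAt_decRearr_Ici (hΩ : volume Ω ≠ ⊤) (hwb : ∀ x ∈ Ω, |w x| ≤ M)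
    (hs₀ : 0 ≤ s) (hs : s < (volume Ω).toReal) :
    ContinuousWithinAt (decRearr Ω w) (Ici s) s := by
  refine tendsto_order.2 ⟨fun a ha => ?_, fun b hb => ?_⟩
  · have hsa := (lt_decRearr_iff hΩ hwb hs₀ hs).1 ha
    filter_upwards [Ico_mem_nhdsGE hsa] with s' hs'
    exact (lt_decRearr_iff hΩ hwb (hs₀.trans hs'.1)
      (hs'.2.trans_le (distFun_le_toReal_volume hΩ))).2 hs'.2
  · filter_upwards [Ico_mem_nhdsGE hs] with s' hs'
    exact (decRearr_antitoneOn hΩ hwb ⟨hs₀, hs⟩ ⟨hs₀.trans hs'.1, hs'.2⟩ hs'.1).trans_lt hb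

lemma tendsto_apply_of_tendsto_distFun (hΩ : volume Ω ≠ ⊤) (hwb : ∀ x ∈ Ω, |w x| ≤ M)
    (hs₀ : 0 ≤ s) (hs : s < (volume Ω).toReal) {z : ℕ → Fin d → ℝ}
    (hz : ∀ n, s < distFun Ω w (w (z n)))
    (hlim : Tendsto (fun n => distFun Ω w (w (z n))) atTop (𝓝 s)) :
    Tendsto (fun n => w (z n)) atTop (𝓝 (decRearr Ω w s)) := by
  have hlow : Tendsto (fun n => decRearr Ω w (distFun Ω w (w (z n)))) atTop
      (𝓝 (decRearr Ω w s)) :=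
    (continuousWithinAt_decRearr_Ici hΩ hwb hs₀ hs).tendsto.comp
      (tendsto_nhdsWithin_iff.2 ⟨hlim, Eventually.of_forall fun n => (hz n).le⟩)
  refine tendsto_of_tendsto_of_tendsto_of_le_of_le' hlow tendsto_const_nhds ?_
    (Eventually.of_forall fun n => ((lt_decRearr_iff hΩ hwb hs₀ hs).2 (hz n)).le)
  filter_upwards [hlim.eventually (gt_mem_nhds hs)] with n hn
  exact (decRearr_le_iff hΩ hwb (hs₀.trans (hz n).le) hn).2 le_rfl

lemma aemeasurable_decRearr (hΩ : volume Ω ≠ ⊤) (hwb : ∀ x ∈ Ω, |w x| ≤ M) :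
    AEMeasurable (decRearr Ω w) (volume.restrict (Ioo 0 (volume Ω).toReal)) :=
  aemeasurable_restrict_of_antitoneOn measurableSet_Ioo
    ((decRearr_antitoneOn hΩ hwb).mono Ioo_subset_Ico_self)

lemma volume_Ioo_inter_Ici {a b : ℝ} (ha : 0 ≤ a) :
    volume (Ioo 0 b ∩ Ici a) = ENNReal.ofReal (b - a) :=
  le_antisymm
    ((measure_mono (show Ioo 0 b ∩ Ici a ⊆ Icc a b from fun _ hx => ⟨hx.2, hx.1.2.le⟩)).trans
      Real.volume_Icc.le)
    (Real.volume_Ioo.ge.trans (measure_mono (show Ioo a b ⊆ Ioo 0 b ∩ Ici a from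
      fun _ hx => ⟨⟨ha.trans_lt hx.1, hx.2⟩, hx.1.le⟩)))

lemma map_restrict_decRearr (hΩm : MeasurableSet Ω) (hw : Measurable w) (hΩ : volume Ω ≠ ⊤)
    (hwb : ∀ x ∈ Ω, |w x| ≤ M) :
    (volume.restrict (Ioo 0 (volume Ω).toReal)).map (decRearr Ω w) =
      (volume.restrict Ω).map w := by
  refine Measure.ext_of_Iic _ _ fun a => ?_
  rw [Measure.map_apply_of_aemeasurable (aemeasurable_decRearr hΩ hwb) measurableSet_Iic,
    Measure.map_apply hw measurableSet_Iic, Measure.restrict_apply' measurableSet_Ioo,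
    Measure.restrict_apply' hΩm]
  have hL : decRearr Ω w ⁻¹' Iic a ∩ Ioo 0 (volume Ω).toReal =
      Ioo 0 (volume Ω).toReal ∩ Ici (distFun Ω w a) := by
    ext σ
    simp only [mem_inter_iff, mem_preimage, mem_Iic, mem_Ici]
    exact ⟨fun ⟨h, hσ⟩ => ⟨hσ, (decRearr_le_iff hΩ hwb hσ.1.le hσ.2).1 h⟩,
      fun ⟨hσ, h⟩ => ⟨(decRearr_le_iff hΩ hwb hσ.1.le hσ.2).2 h, hσ⟩⟩
  have hR : w ⁻¹' Iic a ∩ Ω = Ω \ {x ∈ Ω | a < w x} := by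
    ext x
    simp only [mem_inter_iff, mem_preimage, mem_Iic, Set.mem_sdiff, mem_sep_iff, not_and, not_lt]
    exact ⟨fun ⟨h, hx⟩ => ⟨hx, fun _ => h⟩, fun ⟨hx, h⟩ => ⟨h hx, hx⟩⟩
  have hmeas : NullMeasurableSet {x ∈ Ω | a < w x} :=
    (hΩm.inter (hw measurableSet_Ioi)).nullMeasurableSet
  rw [hL, hR, volume_Ioo_inter_Ici distFun_nonneg,
    measure_sdiff (sep_subset _ _) hmeas (volume_setOf_lt_ne_top hΩ), volume_setOf_lt hΩ,
    ENNReal.ofReal_sub _ distFun_nonneg, ENNReal.ofReal_toReal hΩ]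

lemma setIntegral_comp_decRearr {E : Type*} [NormedAddCommGroup E] [NormedSpace ℝ E]
    (hΩm : MeasurableSet Ω) (hw : Measurable w) (hΩ : volume Ω ≠ ⊤) (hwb : ∀ x ∈ Ω, |w x| ≤ M)
    {F : ℝ → E} (hF : StronglyMeasurable F) :
    ∫ σ in Ioo 0 (volume Ω).toReal, F (decRearr Ω w σ) = ∫ x in Ω, F (w x) := by
  rw [← integral_map (aemeasurable_decRearr hΩ hwb) hF.aestronglyMeasurable,
    map_restrict_decRearr hΩm hw hΩ hwb, integral_map hw.aemeasurable hF.aestronglyMeasurable]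

end DecreasingRearrangement

section Flux

variable {K : ℝ → ℝ} {BK : ℝ} {LK : NNReal} {h : ℝ}

/-- The nonlocal term of problem `P(Ω,u0)`. -/
noncomputable def flux (Ω : Set (Fin d → ℝ)) (K : ℝ → ℝ) (h : ℝ) (w : (Fin d → ℝ) → ℝ)
    (c : ℝ) : ℝ :=
  ∫ y in Ω, K ((w y - c) / h) * (w y - c)

lemma abs_kernel_mul_sub_le (hK : ∀ ξ, |K ξ| ≤ BK) (hKlip : LipschitzWith LK K) (a b : ℝ) :
    |K (a / h) * a - K (b / h) * b| ≤ (BK + LK * |b| / |h|) * |a - b| := by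
  have hKab : |K (a / h) - K (b / h)| ≤ LK * |a - b| / |h| := by
    simpa [Real.dist_eq, ← sub_div, abs_div, mul_div_assoc] using hKlip.dist_le_mul (a / h) (b / h)
  calc |K (a / h) * a - K (b / h) * b|
      = |K (a / h) * (a - b) + (K (a / h) - K (b / h)) * b| := by ring_nf
    _ ≤ BK * |a - b| + LK * |a - b| / |h| * |b| := by
      refine (abs_add_le _ _).trans (add_le_add ?_ ?_) <;> rw [abs_mul]
      · exact mul_le_mul_of_nonneg_right (hK _) (abs_nonneg _)
      · exact mul_le_mul_of_nonneg_right hKab (abs_nonneg _)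
    _ = (BK + LK * |b| / |h|) * |a - b| := by ring

lemma integrableOn_kernel (hΩm : MeasurableSet Ω) (hΩ : volume Ω ≠ ⊤) (hw : Measurable w)
    (hwb : ∀ x ∈ Ω, |w x| ≤ M) (hK : ∀ ξ, |K ξ| ≤ BK) (hKlip : LipschitzWith LK K) (c : ℝ) :
    IntegrableOn (fun y => K ((w y - c) / h) * (w y - c)) Ω := by
  refine Measure.integrableOn_of_bounded hΩ (M := BK * (M + |c|)) ?_
    (ae_restrict_of_forall_mem hΩm fun y hy => ?_)
  · exact ((hKlip.continuous.measurable.comp ((hw.sub_const c).div_const h)).mul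
      (hw.sub_const c)).aestronglyMeasurable
  · rw [Real.norm_eq_abs, abs_mul]
    exact mul_le_mul (hK _) ((abs_sub _ _).trans (add_le_add (hwb y hy) le_rfl))
      (abs_nonneg _) ((abs_nonneg _).trans (hK 0))

lemma abs_flux_sub_flux_le (hΩm : MeasurableSet Ω) (hΩ : volume Ω ≠ ⊤)
    (hK : ∀ ξ, |K ξ| ≤ BK) (hKlip : LipschitzWith LK K) {w₁ w₂ : (Fin d → ℝ) → ℝ}
    (hw₁ : Measurable w₁) (hw₂ : Measurable w₂) (hwb₁ : ∀ x ∈ Ω, |w₁ x| ≤ M)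
    (hwb₂ : ∀ x ∈ Ω, |w₂ x| ≤ M) {c₁ c₂ R ε : ℝ} (hc₂ : |c₂| ≤ R)
    (hε : ∀ y ∈ Ω, |(w₁ y - c₁) - (w₂ y - c₂)| ≤ ε) :
    |flux Ω K h w₁ c₁ - flux Ω K h w₂ c₂| ≤
      (BK + LK * (M + R) / |h|) * ε * (volume Ω).toReal := by
  rw [flux, flux, ← integral_sub (integrableOn_kernel hΩm hΩ hw₁ hwb₁ hK hKlip c₁)
    (integrableOn_kernel hΩm hΩ hw₂ hwb₂ hK hKlip c₂), ← Real.norm_eq_abs, ← measureReal_def]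
  refine norm_setIntegral_le_of_norm_le_const hΩ.lt_top fun y hy => ?_
  have hb : |w₂ y - c₂| ≤ M + R := (abs_sub _ _).trans (add_le_add (hwb₂ y hy) hc₂)
  have hBK : 0 ≤ BK := (abs_nonneg _).trans (hK 0)
  have hMR : 0 ≤ M + R := (abs_nonneg _).trans hb
  rw [Real.norm_eq_abs]
  refine (abs_kernel_mul_sub_le hK hKlip _ _).trans (mul_le_mul ?_ (hε y hy) (abs_nonneg _) ?_)
  · gcongr
  · positivity

lemma continuous_flux (hΩm : MeasurableSet Ω) (hΩ : volume Ω ≠ ⊤) (hw : Measurable w)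
    (hwb : ∀ x ∈ Ω, |w x| ≤ M) (hK : ∀ ξ, |K ξ| ≤ BK) (hKlip : LipschitzWith LK K) :
    Continuous (flux Ω K h w) :=
  continuous_iff_continuousAt.2 fun c => continuousAt_of_locally_lipschitz one_pos
    ((BK + LK * (M + |c|) / |h|) * (volume Ω).toReal) fun c' _ => by
      rw [Real.dist_eq, Real.dist_eq, mul_right_comm]
      exact abs_flux_sub_flux_le hΩm hΩ hK hKlip hw hw hwb hwb le_rfl fun y _ => by
        rw [sub_sub_sub_cancel_left, abs_sub_comm]

lemma intervalIntegral_decRearr_eq_flux (hΩm : MeasurableSet Ω) (hw : Measurable w)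
    (hΩ : volume Ω ≠ ⊤) (hwb : ∀ x ∈ Ω, |w x| ≤ M) (hKc : Continuous K) (c : ℝ) :
    ∫ σ in (0 : ℝ)..(volume Ω).toReal, K ((decRearr Ω w σ - c) / h) * (decRearr Ω w σ - c) =
      flux Ω K h w c := by
  have hF : Continuous fun v => K ((v - c) / h) * (v - c) := by fun_prop
  rw [intervalIntegral.integral_of_le ENNReal.toReal_nonneg, integral_Ioc_eq_integral_Ioo]
  exact setIntegral_comp_decRearr hΩm hw hΩ hwb hF.stronglyMeasurable

lemma exists_lipschitzOnWith_rhs (hΩm : MeasurableSet Ω) (hΩ : volume Ω ≠ ⊤)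
    (hK : ∀ ξ, |K ξ| ≤ BK) (hKlip : LipschitzWith LK K) {I : Set ℝ} {u : ℝ → (Fin d → ℝ) → ℝ}
    {B : ℝ} (hu : ∀ τ ∈ I, Measurable (u τ)) (hub : ∀ τ ∈ I, ∀ x ∈ Ω, |u τ x| ≤ M)
    (hulip : ∀ τ ∈ I, ∀ σ ∈ I, ∀ x ∈ Ω, |u τ x - u σ x| ≤ B * |τ - σ|)
    (lam : ℝ) (u0 : (Fin d → ℝ) → ℝ) :
    ∃ C, ∀ x ∈ Ω,
      LipschitzOnWith C (fun τ => flux Ω K h (u τ) (u τ x) + lam * (u0 x - u τ x)) I := by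
  refine ⟨_, fun x hx => LipschitzOnWith.of_dist_le' (K :=
    (BK + LK * (2 * M) / |h|) * (2 * B) * (volume Ω).toReal + |lam| * B) fun τ hτ σ hσ => ?_⟩
  have hflux := abs_flux_sub_flux_le (h := h) hΩm hΩ hK hKlip (hu τ hτ) (hu σ hσ)
    (hub τ hτ) (hub σ hσ) (by linarith [hub σ hσ x hx] : |u σ x| ≤ M) (ε := 2 * B * |τ - σ|)
    fun y hy => by
      rw [sub_sub_sub_comm]
      linarith [abs_sub (u τ y - u σ y) (u τ x - u σ x), hulip τ hτ σ hσ y hy,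
        hulip τ hτ σ hσ x hx]
  have hlam : |lam * (u0 x - u τ x) - lam * (u0 x - u σ x)| ≤ |lam| * (B * |τ - σ|) := by
    rw [← mul_sub, abs_mul, sub_sub_sub_cancel_left, abs_sub_comm]
    exact mul_le_mul_of_nonneg_left (hulip τ hτ σ hσ x hx) (abs_nonneg _)
  rw [Real.dist_eq, Real.dist_eq, add_sub_add_comm]
  calc _ ≤ _ := abs_add_le _ _
    _ ≤ (BK + LK * (M + M) / |h|) * (2 * B * |τ - σ|) * (volume Ω).toReal
        + |lam| * (B * |τ - σ|) := add_le_add hflux hlam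
    _ = _ := by ring

end Flux

section Derivatives

variable {S : Set ℝ} {C : NNReal} {x y : ℝ}

lemma abs_sub_sub_mul_le_of_lipschitzOnWith (hS : Convex ℝ S) {f f' : ℝ → ℝ}
    (hf : ∀ x ∈ S, HasDerivWithinAt f (f' x) S x) (hf' : LipschitzOnWith C f' S)
    (hx : x ∈ S) (hy : y ∈ S) : |f y - f x - f' x * (y - x)| ≤ C * (y - x) ^ 2 := by
  have hxy : uIcc x y ⊆ S := hS.ordConnected.uIcc_subset hx hy
  have hg : ∀ σ ∈ uIcc x y, HasDerivWithinAt (fun σ => f σ - f' x * σ) (f' σ - f' x)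
      (uIcc x y) σ := fun σ hσ =>
    ((hf σ (hxy hσ)).mono hxy).sub (by simpa using (hasDerivWithinAt_id σ _).const_mul (f' x))
  have hbound : ∀ σ ∈ uIcc x y, ‖f' σ - f' x‖ ≤ C * |y - x| := fun σ hσ => by
    rw [← dist_eq_norm, ← Real.dist_eq]
    exact (hf'.dist_le_mul σ (hxy hσ) x hx).trans
      (mul_le_mul_of_nonneg_left (abs_sub_left_of_mem_uIcc hσ) C.2)
  have := (convex_uIcc x y).norm_image_sub_le_of_norm_hasDerivWithin_le hg hbound
    left_mem_uIcc right_mem_uIcc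
  rw [Real.norm_eq_abs, Real.norm_eq_abs] at this
  calc |f y - f x - f' x * (y - x)| = |f y - f' x * y - (f x - f' x * x)| := by ring_nf
    _ ≤ C * |y - x| * |y - x| := this
    _ = C * (y - x) ^ 2 := by rw [mul_assoc, ← sq, sq_abs]

lemma hasDerivWithinAt_of_abs_sub_sub_mul_le {g : ℝ → ℝ} {g' c : ℝ}
    (hg : ∀ y ∈ S, |g y - g x - g' * (y - x)| ≤ c * (y - x) ^ 2) : HasDerivWithinAt g g' S x := by
  rw [hasDerivWithinAt_iff_isLittleO]
  refine Asymptotics.IsBigO.trans_isLittleO (g := fun y => |y - x| ^ 2) ?_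
    ((Asymptotics.isLittleO_pow_sub_sub x one_lt_two).mono nhdsWithin_le_nhds)
  refine Asymptotics.IsBigO.of_bound c (eventually_nhdsWithin_of_forall fun y hy => ?_)
  simpa [smul_eq_mul, mul_comm (y - x)] using hg y hy

lemma hasDerivWithinAt_of_tendsto_of_lipschitzOnWith (hS : Convex ℝ S) {f f' : ℕ → ℝ → ℝ}
    {g : ℝ → ℝ} {g' : ℝ} (hf : ∀ n, ∀ x ∈ S, HasDerivWithinAt (f n) (f' n x) S x)
    (hf' : ∀ n, LipschitzOnWith C (f' n) S)
    (hfg : ∀ y ∈ S, Tendsto (fun n => f n y) atTop (𝓝 (g y)))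
    (hx : x ∈ S) (hf'g' : Tendsto (fun n => f' n x) atTop (𝓝 g')) :
    HasDerivWithinAt g g' S x :=
  hasDerivWithinAt_of_abs_sub_sub_mul_le fun y hy =>
    le_of_tendsto (((hfg y hy).sub (hfg x hx)).sub (hf'g'.mul_const (y - x))).abs
      (Eventually.of_forall fun n => abs_sub_sub_mul_le_of_lipschitzOnWith hS (hf n) (hf' n) hx hy)

end Derivatives

theorem stmt_13_general
    (d : ℕ)
    (Ω : Set (Fin d → ℝ)) (hΩopen : IsOpen Ω) (hΩbdd : Bornology.IsBounded Ω)
    (K : ℝ → ℝ) (hKnonneg : ∀ ξ, 0 ≤ K ξ) (BK : ℝ) (hKbdd : ∀ ξ, K ξ ≤ BK)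
    (LK : NNReal) (hKlip : LipschitzWith LK K)
    (h : ℝ) (lam : ℝ) (T : ℝ)
    (u0 : (Fin d → ℝ) → ℝ) (hu0m : Measurable u0) (M0 : ℝ) (hu0b : ∀ x ∈ Ω, |u0 x| ≤ M0)
    (u : ℝ → (Fin d → ℝ) → ℝ)
    -- u is a solution of P(Ω,u0)
    (humeas : ∀ t ∈ Icc (0:ℝ) T, Measurable (u t))
    (M : ℝ) (hubdd : ∀ t ∈ Icc (0:ℝ) T, ∀ x ∈ Ω, |u t x| ≤ M)
    (hinit : ∀ x ∈ Ω, u 0 x = u0 x)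
    (hsol : ∀ t ∈ Icc (0:ℝ) T, ∀ x ∈ Ω,
      HasDerivWithinAt (fun τ => u τ x)
        ((∫ y in Ω, K ((u t y - u t x) / h) * (u t y - u t x)) + lam * (u0 x - u t x))
        (Icc 0 T) t)
    -- ∂_t u is bounded on [0,T]×Ω
    (B : ℝ) (hdtb : ∀ t ∈ Icc (0:ℝ) T, ∀ x ∈ Ω,
      |(∫ y in Ω, K ((u t y - u t x) / h) * (u t y - u t x)) + lam * (u0 x - u t x)| ≤ B)
    -- no flat regions
    (hu0flat : ∀ q : ℝ, volume {x ∈ Ω | u0 x = q} = 0)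
    (huflat : ∀ t ∈ Icc (0:ℝ) T, ∀ q : ℝ, volume {x ∈ Ω | u t x = q} = 0)
    -- level-set invariance
    (hlevel : ∀ t ∈ Icc (0:ℝ) T, ∀ x1 ∈ Ω, ∀ x2 ∈ Ω, u0 x1 = u0 x2 → u t x1 = u t x2)
    (hmono : ∀ t ∈ Icc (0:ℝ) T, ∀ x1 ∈ Ω, ∀ x2 ∈ Ω, u0 x2 < u0 x1 → u t x2 ≤ u t x1) :
    (∀ s ∈ Ioo (0:ℝ) (volume Ω).toReal, decRearr Ω (u 0) s = decRearr Ω u0 s) ∧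
    (∀ t ∈ Icc (0:ℝ) T, ∀ᵐ s ∂(volume.restrict (Ioo (0:ℝ) (volume Ω).toReal)),
      HasDerivWithinAt (fun τ => decRearr Ω (u τ) s)
        ((∫ σ in (0:ℝ)..(volume Ω).toReal,
            K ((decRearr Ω (u t) σ - decRearr Ω (u t) s) / h) *
              (decRearr Ω (u t) σ - decRearr Ω (u t) s))
          + lam * (decRearr Ω u0 s - decRearr Ω (u t) s))
        (Icc 0 T) t) := by
  have hΩm : MeasurableSet Ω := hΩopen.measurableSet
  have hΩ : volume Ω ≠ ⊤ := hΩbdd.measure_lt_top.ne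
  have hK : ∀ ξ, |K ξ| ≤ BK := fun ξ => (abs_of_nonneg (hKnonneg ξ)).trans_le (hKbdd ξ)
  refine ⟨fun s _ => by rw [decRearr_congr hinit], fun t ht => ?_⟩
  refine ae_restrict_of_forall_mem measurableSet_Ioo fun s hs => ?_
  -- points `z n` whose rank under `u0`, hence under every `u τ`, decreases to `s`
  obtain ⟨z, hzΩ, hzs, hzlim⟩ :=
    exists_seq_tendsto_distFun hΩm hu0m hΩ hu0b hu0flat hs.1.le hs.2
  have hconv : ∀ τ ∈ Icc 0 T, Tendsto (fun n => u τ (z n)) atTop (𝓝 (decRearr Ω (u τ) s)) := by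
    intro τ hτ
    have hrank : ∀ n, distFun Ω (u τ) (u τ (z n)) = distFun Ω u0 (u0 (z n)) := fun n =>
      distFun_apply_eq_of_level (hmono τ hτ) (hlevel τ hτ) (huflat τ hτ _) (hzΩ n)
    simp only [← hrank] at hzs hzlim
    exact tendsto_apply_of_tendsto_distFun hΩ (hubdd τ hτ) hs.1.le hs.2 hzs hzlim
  have hulip : ∀ τ ∈ Icc 0 T, ∀ σ ∈ Icc 0 T, ∀ x ∈ Ω, |u τ x - u σ x| ≤ B * |τ - σ| :=
    fun τ hτ σ hσ x hx => by
      simpa only [Real.norm_eq_abs] using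
        (convex_Icc 0 T).norm_image_sub_le_of_norm_hasDerivWithin_le
          (fun τ' hτ' => hsol τ' hτ' x hx) (fun τ' hτ' => hdtb τ' hτ' x hx) hσ hτ
  obtain ⟨C, hC⟩ := exists_lipschitzOnWith_rhs (h := h) hΩm hΩ hK hKlip humeas hubdd hulip lam u0
  rw [intervalIntegral_decRearr_eq_flux hΩm (humeas t ht) hΩ (hubdd t ht) hKlip.continuous]
  refine hasDerivWithinAt_of_tendsto_of_lipschitzOnWith (convex_Icc 0 T)
    (fun n τ hτ => hsol τ hτ (z n) (hzΩ n)) (fun n => hC _ (hzΩ n)) hconv ht ?_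
  exact (((continuous_flux hΩm hΩ (humeas t ht) (hubdd t ht) hK hKlip).tendsto _).comp
    (hconv t ht)).add (((tendsto_apply_of_tendsto_distFun hΩ hu0b hs.1.le hs.2 hzs hzlim).sub
      (hconv t ht)).const_mul lam)

/-- Rearrangement of a solution solves the one-dimensional problem (Theorem 3.3,
forward direction): if `u` solves P(Ω,u0), with no flat regions and time-invariant
level set structure, then `u_*(0,·) = u_{0*}` and `u_*` solves P((0,|Ω|),u_{0*}),
for every `t ∈ [0,T]` and almost every `s ∈ (0,|Ω|)`. -/
theorem stmt_13
    (d : ℕ) (hd : 1 ≤ d)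
    (Ω : Set (Fin d → ℝ)) (hΩopen : IsOpen Ω) (hΩbdd : Bornology.IsBounded Ω)
    (K : ℝ → ℝ) (hKnonneg : ∀ ξ, 0 ≤ K ξ) (BK : ℝ) (hKbdd : ∀ ξ, K ξ ≤ BK)
    (LK : NNReal) (hKlip : LipschitzWith LK K)
    (h : ℝ) (hh : 0 < h) (lam : ℝ) (hlam : 0 ≤ lam) (T : ℝ) (hT : 0 < T)
    (u0 : (Fin d → ℝ) → ℝ) (hu0m : Measurable u0) (M0 : ℝ) (hu0b : ∀ x ∈ Ω, |u0 x| ≤ M0)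
    (u : ℝ → (Fin d → ℝ) → ℝ)
    -- u is a solution of P(Ω,u0)
    (humeas : ∀ t ∈ Icc (0:ℝ) T, Measurable (u t))
    (M : ℝ) (hubdd : ∀ t ∈ Icc (0:ℝ) T, ∀ x ∈ Ω, |u t x| ≤ M)
    (hinit : ∀ x ∈ Ω, u 0 x = u0 x)
    (hsol : ∀ t ∈ Icc (0:ℝ) T, ∀ x ∈ Ω,
      HasDerivWithinAt (fun τ => u τ x)
        ((∫ y in Ω, K ((u t y - u t x) / h) * (u t y - u t x)) + lam * (u0 x - u t x))
        (Icc 0 T) t)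
    -- ∂_t u is bounded on [0,T]×Ω
    (B : ℝ) (hdtb : ∀ t ∈ Icc (0:ℝ) T, ∀ x ∈ Ω,
      |(∫ y in Ω, K ((u t y - u t x) / h) * (u t y - u t x)) + lam * (u0 x - u t x)| ≤ B)
    -- no flat regions
    (hu0flat : ∀ q : ℝ, volume {x ∈ Ω | u0 x = q} = 0)
    (huflat : ∀ t ∈ Icc (0:ℝ) T, ∀ q : ℝ, volume {x ∈ Ω | u t x = q} = 0)
    -- level-set invariance
    (hlevel : ∀ t ∈ Icc (0:ℝ) T, ∀ x1 ∈ Ω, ∀ x2 ∈ Ω, u0 x1 = u0 x2 → u t x1 = u t x2)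
    (hmono : ∀ t ∈ Icc (0:ℝ) T, ∀ x1 ∈ Ω, ∀ x2 ∈ Ω, u0 x2 < u0 x1 → u t x2 ≤ u t x1) :
    (∀ s ∈ Ioo (0:ℝ) (volume Ω).toReal, decRearr Ω (u 0) s = decRearr Ω u0 s) ∧
    (∀ t ∈ Icc (0:ℝ) T, ∀ᵐ s ∂(volume.restrict (Ioo (0:ℝ) (volume Ω).toReal)),
      HasDerivWithinAt (fun τ => decRearr Ω (u τ) s)
        ((∫ σ in (0:ℝ)..(volume Ω).toReal,
            K ((decRearr Ω (u t) σ - decRearr Ω (u t) s) / h) *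
              (decRearr Ω (u t) σ - decRearr Ω (u t) s))
          + lam * (decRearr Ω u0 s - decRearr Ω (u t) s))
        (Icc 0 T) t) :=
  stmt_13_general d Ω hΩopen hΩbdd K hKnonneg BK hKbdd LK hKlip h lam T u0 hu0m M0 hu0b u humeas M
    hubdd hinit hsol B hdtb hu0flat huflat hlevel hmono
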